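/- Let D∘ be a dissection of the polygon P∘ and let D• be a D∘-accordion dissection. Then for every diagonal δ∘ ∈ D∘, the δ∘-coordinates of the g-vectors g(D∘, δ•) of the diagonals δ• ∈ D• do not take both the value +1 and the value −1 (sign-coherence: no coordinate hyperplane of ℝ^{D∘} meets the interior of the cone generated by {g(D∘, δ•) : δ• ∈ D•}). -/

import Mathlib

/-!
Combinatorics of dissections of a convex polygon, following Pilaud–Plamondon–Stella,
"A τ-tilting approach to dissections of polygons".

We fix `2m` points on the unit circle, alternately colored white and black.  The white points
are labelled by `ZMod m` (the white point `i` sitting at angle `2πi/m`), and the black points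
are labelled by `ZMod m` as well (the black point `i` sitting between the white points `i` and
`i + 1`).  `P∘` (resp. `P•`) is the convex polygon with white (resp. black) vertices.  Segments
between points of the same color are encoded as unordered pairs `Sym2 (ZMod m)` of labels.
-/

open scoped Classical

/-- The point `x` lies strictly inside the counterclockwise arc from `a` to `b`
(all three points of the same color). -/
def wbtw (m : ℕ) (a x b : ZMod m) : Prop := (x - a).val < (b - a).val ∧ x ≠ a

/-- The black point `i` (between the white points `i` and `i+1`) lies strictly inside the
counterclockwise arc from the white point `a` to the white point `b`. -/
def bbtw (m : ℕ) (a : ZMod m) (i : ZMod m) (b : ZMod m) : Prop := (i - a).val < (b - a).val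

/-- `p` is a diagonal of the polygon: its endpoints are distinct and non-consecutive. -/
def IsDiag (m : ℕ) (p : Sym2 (ZMod m)) : Prop :=
  ∀ a b, p = s(a, b) → a ≠ b ∧ b ≠ a + 1 ∧ a ≠ b + 1

/-- Two segments with endpoints of the same color cross (all four endpoints are distinct, and
exactly one endpoint of the second lies strictly inside each of the two arcs determined by the
first). -/
def Cross (m : ℕ) (p q : Sym2 (ZMod m)) : Prop :=
  ∀ a b c d, p = s(a, b) → q = s(c, d) →
    (a ≠ c ∧ a ≠ d ∧ b ≠ c ∧ b ≠ d) ∧ (wbtw m a c b ↔ ¬ wbtw m a d b)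

/-- The black segment `q` crosses the white segment `p`: exactly one endpoint of `q` lies
strictly inside each of the two arcs determined by `p`. -/
def BWCross (m : ℕ) (q p : Sym2 (ZMod m)) : Prop :=
  ∀ i j a b, q = s(i, j) → p = s(a, b) → (bbtw m a i b ↔ ¬ bbtw m a j b)

/-- A dissection of the white polygon `P∘`: a set of pairwise non-crossing diagonals. -/
def IsDissection (m : ℕ) (D : Finset (Sym2 (ZMod m))) : Prop :=
  (∀ p ∈ D, IsDiag m p) ∧ ∀ p ∈ D, ∀ q ∈ D, ¬ Cross m p q

/-- `b` is the counterclockwise successor of `a` among the elements of `C`. -/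
def nextIn (m : ℕ) (C : Finset (ZMod m)) (a b : ZMod m) : Prop :=
  a ∈ C ∧ b ∈ C ∧ a ≠ b ∧ ∀ x ∈ C, ¬ wbtw m a x b

/-- `C` (a set of white vertices) is a cell of the dissection `D`: it has at least three
vertices, any two cyclically consecutive vertices of `C` are joined by a boundary edge of the
polygon or by a diagonal of `D`, and no diagonal of `D` joins two non-consecutive vertices
of `C`. -/
def IsCell (m : ℕ) (D : Finset (Sym2 (ZMod m))) (C : Finset (ZMod m)) : Prop :=
  3 ≤ C.card ∧
  (∀ a b, nextIn m C a b → (b = a + 1 ∨ s(a, b) ∈ D)) ∧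
  (∀ p ∈ D, ∀ a b, p = s(a, b) → a ∈ C → b ∈ C → (nextIn m C a b ∨ nextIn m C b a))

/-- `p` is an edge of the cell `C` (either a boundary edge of the polygon or a diagonal of the
dissection). -/
def IsCellEdge (m : ℕ) (C : Finset (ZMod m)) (p : Sym2 (ZMod m)) : Prop :=
  ∃ a b, p = s(a, b) ∧ nextIn m C a b

/-- `q` (a diagonal of the black polygon `P•`) is a `D`-accordion diagonal: it crosses either
none or exactly two consecutive edges (i.e., two edges sharing a vertex) of every cell
of `D`. -/
def IsAccordionDiag (m : ℕ) (D : Finset (Sym2 (ZMod m))) (q : Sym2 (ZMod m)) : Prop :=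
  IsDiag m q ∧ ∀ C, IsCell m D C →
    (∀ p, IsCellEdge m C p → ¬ BWCross m q p) ∨
    (∃ p₁ p₂, p₁ ≠ p₂ ∧ IsCellEdge m C p₁ ∧ IsCellEdge m C p₂ ∧
      BWCross m q p₁ ∧ BWCross m q p₂ ∧ (∃ v, v ∈ p₁ ∧ v ∈ p₂) ∧
      ∀ p, IsCellEdge m C p → BWCross m q p → (p = p₁ ∨ p = p₂))

/-- A `D`-accordion dissection: a set of pairwise non-crossing `D`-accordion diagonals. -/
def IsAccordionDissection (m : ℕ) (D : Finset (Sym2 (ZMod m))) (s : Finset (Sym2 (ZMod m))) :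
    Prop :=
  (∀ q ∈ s, IsAccordionDiag m D q) ∧ ∀ q ∈ s, ∀ q' ∈ s, ¬ Cross m q q'

/-- In the two cells of `D` adjacent to the white diagonal `δ∘ = s(a,b)`, the other edge
crossed by the black diagonal `δ•` in the cell `C` contains the white vertex `v`. -/
def OtherCrossedEdgeAt (m : ℕ) (δbull : Sym2 (ZMod m)) (δcirc : Sym2 (ZMod m))
    (C : Finset (ZMod m)) (v : ZMod m) : Prop :=
  ∃ p, IsCellEdge m C p ∧ p ≠ δcirc ∧ BWCross m δbull p ∧ v ∈ p

/-- The three edges crossed by `δ•` in the two cells of `D` containing `δ∘` form a `Z`. -/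
def ZShape (m : ℕ) (D : Finset (Sym2 (ZMod m))) (δcirc δbull : Sym2 (ZMod m)) : Prop :=
  ∃ a b, δcirc = s(a, b) ∧ BWCross m δbull δcirc ∧
    ∃ C₁ C₂, IsCell m D C₁ ∧ IsCell m D C₂ ∧ nextIn m C₁ b a ∧ nextIn m C₂ a b ∧
      OtherCrossedEdgeAt m δbull δcirc C₁ a ∧ OtherCrossedEdgeAt m δbull δcirc C₂ b

/-- The three edges crossed by `δ•` in the two cells of `D` containing `δ∘` form an `S`. -/
def SShape (m : ℕ) (D : Finset (Sym2 (ZMod m))) (δcirc δbull : Sym2 (ZMod m)) : Prop :=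
  ∃ a b, δcirc = s(a, b) ∧ BWCross m δbull δcirc ∧
    ∃ C₁ C₂, IsCell m D C₁ ∧ IsCell m D C₂ ∧ nextIn m C₁ b a ∧ nextIn m C₂ a b ∧
      OtherCrossedEdgeAt m δbull δcirc C₁ b ∧ OtherCrossedEdgeAt m δbull δcirc C₂ a

/-- The `δ∘`-coordinate `ε(δ∘ ∈ D, δ•)` of the `g`-vector of the black diagonal `δ•` with
respect to the dissection `D`: it is `1`, `-1` or `0` according to whether the three edges
crossed by `δ•` in the two cells of `D` containing `δ∘` form a `Z`, an `S` or a `V` (and `0`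
if `δ•` does not cross `δ∘`). -/
noncomputable def gvec (m : ℕ) (D : Finset (Sym2 (ZMod m))) (δbull : Sym2 (ZMod m))
    (δcirc : Sym2 (ZMod m)) : ℤ :=
  if ZShape m D δcirc δbull then 1 else if SShape m D δcirc δbull then -1 else 0

/-!
Let `δ∘ = s(a, b)` and let `C₁`, `C₂` be the cells of `D∘` on either side of it. A black diagonal
crossing `δ∘` has one endpoint on each side. If it crosses `δ∘` as a `Z`, then in `C₁` it also
crosses the edge of `C₁` at `a`, so its endpoint on that side lies close to `a`; a diagonal crossing
as an `S` crosses the edge of `C₁` at `b` instead, so its endpoint lies close to `b`. Since the edges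
of `C₁` at `a` and at `b` do not cross, the first endpoint comes strictly before the second on the
arc from `a` to `b`; symmetrically, on the other side the order is reversed. Hence a `Z`-diagonal
and an `S`-diagonal always cross, which is impossible inside an accordion dissection.
-/

section CyclicOrder

variable {m : ℕ} [NeZero m]

lemma ZMod.val_sub_eq_ite (u v : ZMod m) :
    (u - v).val = if v.val ≤ u.val then u.val - v.val else u.val + m - v.val := by
  split_ifs with h
  · exact ZMod.val_sub h
  · have hu := ZMod.val_lt u
    have : (u - v).val = (u.val + (m - v.val)) % m := by
      rw [sub_eq_add_neg, ZMod.val_add, ZMod.neg_val, if_neg]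
      rintro rfl
      simp at h
    rw [this, Nat.mod_eq_of_lt (by omega), Nat.add_sub_assoc (ZMod.val_lt v).le]

/-! Every statement about the cyclic order is reduced to linear arithmetic on the positions
`(x - o).val` of the points relative to a base point `o`, which `split_ifs; omega` then decides. -/

lemma ZMod.val_sub_eq_ite_of_base (o u v : ZMod m) :
    (u - v).val = if (v - o).val ≤ (u - o).val then (u - o).val - (v - o).val
      else (u - o).val + m - (v - o).val := by
  rw [← ZMod.val_sub_eq_ite, sub_sub_sub_cancel_right]

lemma ZMod.ne_iff_val_sub_ne (o u v : ZMod m) : u ≠ v ↔ (u - o).val ≠ (v - o).val :=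
  (sub_left_injective (b := o)).ne_iff.symm.trans (ZMod.val_injective m).ne_iff.symm

lemma wbtw_iff_of_base (o a x b : ZMod m) :
    wbtw m a x b ↔
      ((if (a - o).val ≤ (x - o).val then (x - o).val - (a - o).val
        else (x - o).val + m - (a - o).val) <
       (if (a - o).val ≤ (b - o).val then (b - o).val - (a - o).val
        else (b - o).val + m - (a - o).val)) ∧ (x - o).val ≠ (a - o).val := by
  rw [wbtw, ZMod.val_sub_eq_ite_of_base o x a, ZMod.val_sub_eq_ite_of_base o b a,
    ZMod.ne_iff_val_sub_ne o]

lemma bbtw_iff_of_base (o a x b : ZMod m) :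
    bbtw m a x b ↔
      (if (a - o).val ≤ (x - o).val then (x - o).val - (a - o).val
        else (x - o).val + m - (a - o).val) <
       (if (a - o).val ≤ (b - o).val then (b - o).val - (a - o).val
        else (b - o).val + m - (a - o).val) := by
  rw [bbtw, ZMod.val_sub_eq_ite_of_base o x a, ZMod.val_sub_eq_ite_of_base o b a]

lemma wbtw_iff_not_wbtw_swap {a x b : ZMod m} (hxa : x ≠ a) (hxb : x ≠ b) (hab : a ≠ b) :
    wbtw m a x b ↔ ¬ wbtw m b x a := by
  have := ZMod.val_lt (x - a); have := ZMod.val_lt (b - a)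
  rw [ZMod.ne_iff_val_sub_ne a] at hxa hxb hab
  simp only [wbtw_iff_of_base a, sub_self, ZMod.val_zero] at *
  split_ifs at * <;> omega

lemma wbtw_or_wbtw_of_ne_left {u v w : ZMod m} (hvw : v ≠ w) (hvu : v ≠ u) (hwu : w ≠ u) :
    wbtw m u v w ∨ wbtw m u w v := by
  have := ZMod.val_lt (v - u); have := ZMod.val_lt (w - u)
  rw [ZMod.ne_iff_val_sub_ne u] at hvw hvu hwu
  simp only [wbtw_iff_of_base u, sub_self, ZMod.val_zero] at *
  split_ifs at * <;> omega

lemma wbtw_or_wbtw_of_ne_right {u v w : ZMod m} (hvw : v ≠ w) (hvu : v ≠ u) (hwu : w ≠ u) :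
    wbtw m v w u ∨ wbtw m w v u := by
  have := ZMod.val_lt (v - u); have := ZMod.val_lt (w - u)
  rw [ZMod.ne_iff_val_sub_ne u] at hvw hvu hwu
  simp only [wbtw_iff_of_base u, sub_self, ZMod.val_zero] at *
  split_ifs at * <;> omega

lemma wbtw_rotate {a b c : ZMod m} (h : wbtw m a c b) : wbtw m c b a := by
  have := ZMod.val_lt (c - a); have := ZMod.val_lt (b - a)
  simp only [wbtw_iff_of_base a, sub_self, ZMod.val_zero] at *
  split_ifs at * <;> omega

lemma wbtw_of_wbtw_of_wbtw {a b c d : ZMod m} (h₁ : wbtw m a d c) (h₂ : wbtw m a c b) :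
    wbtw m d c b := by
  have := ZMod.val_lt (d - a); have := ZMod.val_lt (c - a); have := ZMod.val_lt (b - a)
  simp only [wbtw_iff_of_base a, sub_self, ZMod.val_zero] at *
  split_ifs at * <;> omega

omit [NeZero m] in
lemma not_wbtw_add_one (a x : ZMod m) : ¬ wbtw m a x (a + 1) := by
  rintro ⟨hlt, hxa⟩
  rw [add_sub_cancel_left, ZMod.val_one_eq_one_mod] at hlt
  have : (x - a).val = 0 := by have := Nat.mod_le 1 m; omega
  exact hxa (sub_eq_zero.mp ((ZMod.val_eq_zero _).mp this))

omit [NeZero m] in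
lemma bbtw_mono_right {a x c b : ZMod m} (h₁ : bbtw m a x c) (h₂ : wbtw m a c b) :
    bbtw m a x b :=
  h₁.trans h₂.1

lemma bbtw_mono_left {a b d x : ZMod m} (h₁ : bbtw m d x b) (h₂ : wbtw m a d b) :
    bbtw m a x b := by
  have := ZMod.val_lt (d - a); have := ZMod.val_lt (x - a); have := ZMod.val_lt (b - a)
  simp only [wbtw_iff_of_base a, bbtw_iff_of_base a, sub_self, ZMod.val_zero] at *
  split_ifs at * <;> omega

lemma not_bbtw_of_bbtw_of_wbtw {a b d x : ZMod m} (h₁ : bbtw m d x b) (h₂ : wbtw m a d b) :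
    ¬ bbtw m a x d := by
  have := ZMod.val_lt (d - a); have := ZMod.val_lt (x - a); have := ZMod.val_lt (b - a)
  simp only [wbtw_iff_of_base a, bbtw_iff_of_base a, sub_self, ZMod.val_zero] at *
  split_ifs at * <;> omega

lemma bbtw_swap_iff {a b : ZMod m} (hab : a ≠ b) (x : ZMod m) :
    bbtw m b x a ↔ ¬ bbtw m a x b := by
  have := ZMod.val_lt (x - a); have := ZMod.val_lt (b - a)
  rw [ZMod.ne_iff_val_sub_ne a] at hab
  simp only [bbtw_iff_of_base a, sub_self, ZMod.val_zero] at *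
  split_ifs at * <;> omega

lemma wbtw_of_bbtw {a b x x' y : ZMod m} (hx' : bbtw m a x' b)
    (hy : ¬ bbtw m a y b) (hxx' : bbtw m a x x') : wbtw m x x' y := by
  have := ZMod.val_lt (x - a); have := ZMod.val_lt (x' - a)
  have := ZMod.val_lt (y - a); have := ZMod.val_lt (b - a)
  simp only [wbtw_iff_of_base a, bbtw_iff_of_base a, sub_self, ZMod.val_zero] at *
  split_ifs at * <;> omega

lemma cross_mk_of_wbtw {u v x y : ZMod m} (huv : u ≠ v)
    (h₁ : wbtw m u x v) (h₂ : wbtw m v y u) : Cross m s(u, v) s(x, y) := by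
  have hxu : x ≠ u := h₁.2
  have hxv : x ≠ v := by rintro rfl; exact lt_irrefl _ h₁.1
  have hyv : y ≠ v := h₂.2
  have hyu : y ≠ u := by rintro rfl; exact lt_irrefl _ h₂.1
  have hx : ¬ wbtw m v x u := (wbtw_iff_not_wbtw_swap hxu hxv huv).mp h₁
  have hy : ¬ wbtw m u y v := fun h => (wbtw_iff_not_wbtw_swap hyv hyu huv.symm).mp h₂ h
  intro a b c d hab hcd
  rw [Sym2.eq_iff] at hab hcd
  rcases hab with ⟨rfl, rfl⟩ | ⟨rfl, rfl⟩ <;> rcases hcd with ⟨rfl, rfl⟩ | ⟨rfl, rfl⟩ <;>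
    exact ⟨by tauto, by tauto⟩

end CyclicOrder

section Cells

variable {m : ℕ} [NeZero m] {C : Finset (ZMod m)}

lemma nextIn.right_unique {u v w : ZMod m} (h₁ : nextIn m C u v) (h₂ : nextIn m C u w) :
    v = w := by
  by_contra hvw
  rcases wbtw_or_wbtw_of_ne_left hvw h₁.2.2.1.symm h₂.2.2.1.symm with h | h
  · exact h₂.2.2.2 v h₁.2.1 h
  · exact h₁.2.2.2 w h₂.2.1 h

lemma nextIn.left_unique {u v w : ZMod m} (h₁ : nextIn m C v u) (h₂ : nextIn m C w u) :
    v = w := by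
  by_contra hvw
  rcases wbtw_or_wbtw_of_ne_right hvw h₁.2.2.1 h₂.2.2.1 with h | h
  · exact h₁.2.2.2 w h₂.1 h
  · exact h₂.2.2.2 v h₁.1 h

lemma nextIn.wbtw_of_mem {a b c : ZMod m} (h : nextIn m C b a) (hc : c ∈ C) (hca : c ≠ a)
    (hcb : c ≠ b) : wbtw m a c b :=
  (wbtw_iff_not_wbtw_swap hca hcb h.2.2.1.symm).mpr (h.2.2.2 c hc)

omit [NeZero m] in
lemma exists_eq_mk_of_bwCross {q : Sym2 (ZMod m)} {a b : ZMod m} (h : BWCross m q s(a, b)) :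
    ∃ i j, q = s(i, j) ∧ bbtw m a i b ∧ ¬ bbtw m a j b := by
  induction q using Sym2.ind with
  | _ i j =>
    have hij := h i j a b rfl rfl
    by_cases hi : bbtw m a i b
    · exact ⟨i, j, rfl, hi, hij.mp hi⟩
    · exact ⟨j, i, Sym2.eq_swap, not_not.mp (mt hij.mpr hi), hi⟩

lemma nextIn.exists_of_otherCrossedEdgeAt_left {a b i j : ZMod m} (h : nextIn m C b a)
    (hj : ¬ bbtw m a j b) (hZ : OtherCrossedEdgeAt m s(i, j) s(a, b) C a) :
    ∃ c, nextIn m C a c ∧ wbtw m a c b ∧ bbtw m a i c := by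
  obtain ⟨p, ⟨x, y, rfl, hxy⟩, hne, hcross, hmem⟩ := hZ
  rcases Sym2.mem_iff.mp hmem with rfl | rfl
  · have hyb : y ≠ b := by rintro rfl; exact hne rfl
    have hy : wbtw m a y b := h.wbtw_of_mem hxy.2.1 hxy.2.2.1.symm hyb
    exact ⟨y, hxy, hy, (hcross i j a y rfl rfl).mpr fun hj' => hj (bbtw_mono_right hj' hy)⟩
  · obtain rfl := hxy.left_unique h
    exact absurd Sym2.eq_swap hne

lemma nextIn.exists_of_otherCrossedEdgeAt_right {a b i j : ZMod m} (h : nextIn m C b a)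
    (hj : ¬ bbtw m a j b) (hS : OtherCrossedEdgeAt m s(i, j) s(a, b) C b) :
    ∃ d, nextIn m C d b ∧ wbtw m a d b ∧ ¬ bbtw m a i d := by
  obtain ⟨p, ⟨x, y, rfl, hxy⟩, hne, hcross, hmem⟩ := hS
  rcases Sym2.mem_iff.mp hmem with rfl | rfl
  · obtain rfl := hxy.right_unique h
    exact absurd Sym2.eq_swap hne
  · have hxa : x ≠ a := by rintro rfl; exact hne rfl
    have hx : wbtw m a x b := h.wbtw_of_mem hxy.1 hxa hxy.2.2.1
    have hi : bbtw m x i b := (hcross i j x b rfl rfl).mpr fun hj' => hj (bbtw_mono_left hj' hx)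
    exact ⟨x, hxy, hx, not_bbtw_of_bbtw_of_wbtw hi hx⟩

end Cells

section Dissection

variable {m : ℕ} [NeZero m] {D : Finset (Sym2 (ZMod m))}

lemma IsDissection.not_wbtw_of_nextIn {C C' : Finset (ZMod m)} {a b c d : ZMod m}
    (hD : IsDissection m D) (hC : IsCell m D C) (hC' : IsCell m D C')
    (hac : nextIn m C a c) (hdb : nextIn m C' d b) (hcb : wbtw m a c b) : ¬ wbtw m a d c := by
  intro hd
  have hcross : Cross m s(a, c) s(d, b) :=
    cross_mk_of_wbtw hac.2.2.1 hd (wbtw_rotate hcb)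
  rcases hC.2.1 a c hac with rfl | hacD
  · exact not_wbtw_add_one a d hd
  rcases hC'.2.1 d b hdb with rfl | hdbD
  · exact not_wbtw_add_one d c (wbtw_of_wbtw_of_wbtw hd hcb)
  exact hD.2 _ hacD _ hdbD hcross

lemma IsDissection.bbtw_of_otherCrossedEdgeAt {C C' : Finset (ZMod m)} {a b i j i' j' : ZMod m}
    (hD : IsDissection m D) (hC : IsCell m D C) (hC' : IsCell m D C')
    (h : nextIn m C b a) (h' : nextIn m C' b a) (hj : ¬ bbtw m a j b) (hj' : ¬ bbtw m a j' b)
    (hZ : OtherCrossedEdgeAt m s(i, j) s(a, b) C a)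
    (hS : OtherCrossedEdgeAt m s(i', j') s(a, b) C' b) : bbtw m a i i' := by
  obtain ⟨c, hac, hc, hic⟩ := h.exists_of_otherCrossedEdgeAt_left hj hZ
  obtain ⟨d, hdb, hd, hi'd⟩ := h'.exists_of_otherCrossedEdgeAt_right hj' hS
  have hcd : (c - a).val ≤ (d - a).val :=
    not_lt.mp fun hlt => hD.not_wbtw_of_nextIn hC hC' hac hdb hc ⟨hlt, hd.2⟩
  exact hic.trans_le (hcd.trans (not_lt.mp hi'd))

lemma IsDissection.cross_of_otherCrossedEdgeAt {C₁ C₂ C₁' C₂' : Finset (ZMod m)}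
    {a b i j i' j' : ZMod m} (hD : IsDissection m D)
    (hC₁ : IsCell m D C₁) (hC₂ : IsCell m D C₂) (hC₁' : IsCell m D C₁') (hC₂' : IsCell m D C₂')
    (h₁ : nextIn m C₁ b a) (h₂ : nextIn m C₂ a b) (h₁' : nextIn m C₁' b a)
    (h₂' : nextIn m C₂' a b)
    (hi : bbtw m a i b) (hj : ¬ bbtw m a j b) (hi' : bbtw m a i' b) (hj' : ¬ bbtw m a j' b)
    (hZ₁ : OtherCrossedEdgeAt m s(i, j) s(a, b) C₁ a)
    (hZ₂ : OtherCrossedEdgeAt m s(i, j) s(a, b) C₂ b)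
    (hS₁ : OtherCrossedEdgeAt m s(i', j') s(a, b) C₁' b)
    (hS₂ : OtherCrossedEdgeAt m s(i', j') s(a, b) C₂' a) :
    Cross m s(i, j) s(i', j') := by
  have hab : a ≠ b := h₁.2.2.1.symm
  have hii' : bbtw m a i i' := hD.bbtw_of_otherCrossedEdgeAt hC₁ hC₁' h₁ h₁' hj hj' hZ₁ hS₁
  rw [Sym2.eq_swap (a := a), Sym2.eq_swap (a := i)] at hZ₂
  rw [Sym2.eq_swap (a := a), Sym2.eq_swap (a := i')] at hS₂
  have hi₂ : ¬ bbtw m b i a := fun h => (bbtw_swap_iff hab i).mp h hi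
  have hi₂' : ¬ bbtw m b i' a := fun h => (bbtw_swap_iff hab i').mp h hi'
  have hjj' : bbtw m b j j' := hD.bbtw_of_otherCrossedEdgeAt hC₂ hC₂' h₂ h₂' hi₂ hi₂' hZ₂ hS₂
  exact cross_mk_of_wbtw (by rintro rfl; exact hj hi)
    (wbtw_of_bbtw hi' hj hii')
    (wbtw_of_bbtw ((bbtw_swap_iff hab j').mpr hj')
      hi₂ hjj')

lemma IsDissection.cross_of_zShape_of_sShape {δ q q' : Sym2 (ZMod m)} (hD : IsDissection m D)
    (hZ : ZShape m D δ q) (hS : SShape m D δ q') : Cross m q q' := by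
  obtain ⟨a, b, rfl, hq, C₁, C₂, hC₁, hC₂, h₁, h₂, hZ₁, hZ₂⟩ := hZ
  obtain ⟨a', b', hδ, hq', C₁', C₂', hC₁', hC₂', h₁', h₂', hS₁, hS₂⟩ := hS
  obtain ⟨i, j, rfl, hi, hj⟩ := exists_eq_mk_of_bwCross hq
  obtain ⟨i', j', rfl, hi', hj'⟩ := exists_eq_mk_of_bwCross hq'
  rcases Sym2.eq_iff.mp hδ with ⟨rfl, rfl⟩ | ⟨rfl, rfl⟩
  · exact hD.cross_of_otherCrossedEdgeAt hC₁ hC₂ hC₁' hC₂' h₁ h₂ h₁' h₂' hi hj hi' hj'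
      hZ₁ hZ₂ hS₁ hS₂
  · exact hD.cross_of_otherCrossedEdgeAt hC₁ hC₂ hC₂' hC₁' h₁ h₂ h₂' h₁' hi hj hi' hj'
      hZ₁ hZ₂ hS₂ hS₁

end Dissection

lemma zShape_of_gvec_eq_one {m : ℕ} {D : Finset (Sym2 (ZMod m))} {q δ : Sym2 (ZMod m)}
    (h : gvec m D q δ = 1) : ZShape m D δ q := by
  by_contra hZ
  rw [gvec, if_neg hZ] at h
  split_ifs at h
  omega

lemma sShape_of_gvec_eq_neg_one {m : ℕ} {D : Finset (Sym2 (ZMod m))} {q δ : Sym2 (ZMod m)}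
    (h : gvec m D q δ = -1) : SShape m D δ q := by
  by_contra hS
  rw [gvec, if_neg hS] at h
  split_ifs at h

/-- **Sign-coherence** (Pilaud–Plamondon–Stella, Remark 5.1).
Let `D∘` be a dissection of the polygon `P∘` and `D•` a `D∘`-accordion dissection.  Then for
every diagonal `δ∘ ∈ D∘` the `δ∘`-coordinates of the `g`-vectors of the diagonals of `D•` do
not take both the value `+1` and the value `-1` (so no coordinate hyperplane meets the interior
of the cone generated by these `g`-vectors). -/
theorem gvec_sign_coherence
    (m : ℕ) (hm : 3 ≤ m)
    (D : Finset (Sym2 (ZMod m))) (hD : IsDissection m D)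
    (s : Finset (Sym2 (ZMod m))) (hs : IsAccordionDissection m D s) :
    ∀ δ ∈ D, ¬ ((∃ q ∈ s, gvec m D q δ = 1) ∧ (∃ q ∈ s, gvec m D q δ = -1)) := by
  have : NeZero m := ⟨by omega⟩
  rintro δ - ⟨⟨q, hq, hZ⟩, ⟨q', hq', hS⟩⟩
  exact hs.2 q hq q' hq'
    (hD.cross_of_zShape_of_sShape (zShape_of_gvec_eq_one hZ) (sShape_of_gvec_eq_neg_one hS))
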